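/- (Average lemma.) Let ρ : 𝕋³ → ℝ be in L²(𝕋³) with ρ̄ ≠ 0, and let u : 𝕋³ → ℝ³ be continuously differentiable and satisfy ∫_{𝕋³} ρ(x) u(x) dx = 0. Then the Euclidean norm of the average of u satisfies |ū| ≤ (‖ρ − ρ̄‖_{L²(𝕋³)} / |ρ̄|) · ‖∇u‖_{L²(𝕋³)}. (In the paper this is applied along a solution of the inhomogeneous Navier–Stokes system, using that ρ̄(t) = ρ̄₀, ‖ρ(t) − ρ̄(t)‖_{L²} = ‖ρ₀ − ρ̄₀‖_{L²} and ∫ ρ(t)u(t) = ∫ ρ₀u₀ = 0 are conserved.) -/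

import Mathlib

/-!
Because `∫ ρ u = 0`, the vector `ρ̄ ū` equals `-∫ (ρ - ρ̄) (u - ū)`, so Cauchy–Schwarz gives
`|ρ̄| |ū| ≤ ‖ρ - ρ̄‖₂ ‖u - ū‖₂`, and it remains to prove the Poincaré–Wirtinger inequality
`‖u - ū‖₂ ≤ ‖∇u‖₂` on the unit torus. By periodicity, `ū` is also the average of `u(x + y - c)`
over `y ∈ [0,1)³`, where `c` is the centre of the cube, so `u(x) - ū` is an average of increments
of `u` along segments `x + t (y - c)` of length at most `1`. The fundamental theorem of calculus,
Jensen's inequality and Tonelli's theorem then bound `‖u - ū‖₂²` by the average over `(y, t)` of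
`∫ |∇u(x + t (y - c))|² dx`, which equals `‖∇u‖₂²` by translation invariance on the torus.
-/

open MeasureTheory
open scoped ENNReal BigOperators

noncomputable section

/-- Euclidean space ℝ³. -/
abbrev E3 : Type := EuclideanSpace ℝ (Fin 3)

/-- The fundamental domain [0,1)³ of the torus 𝕋³ = (ℝ/ℤ)³. -/
def T3 : Set E3 := (WithLp.equiv 2 (Fin 3 → ℝ)) ⁻¹' Set.univ.pi fun _ => Set.Ico (0:ℝ) 1

/-- ℤ³-periodicity: encodes that a function on ℝ³ descends to the torus 𝕋³. -/
def Torus3Periodic {F : Type*} (f : E3 → F) : Prop :=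
  ∀ (x : E3) (k : Fin 3 → ℤ),
    f (x + (WithLp.equiv 2 (Fin 3 → ℝ)).symm (fun i => (k i : ℝ))) = f x

/-- The Haar measure of the torus 𝕋³ (total mass 1), realized as Lebesgue measure
restricted to the fundamental domain. -/
def μT : Measure E3 := volume.restrict T3

/-- The i-th partial derivative of a scalar function on ℝ³. -/
def pd (i : Fin 3) (f : E3 → ℝ) (x : E3) : ℝ :=
  fderiv ℝ f x (EuclideanSpace.single i (1:ℝ))

lemma sq_lintegral_le_lintegral_sq {α : Type*} [MeasurableSpace α] {μ : Measure α}
    [IsProbabilityMeasure μ] {f : α → ℝ≥0∞} (hf : AEMeasurable f μ) :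
    (∫⁻ x, f x ∂μ) ^ 2 ≤ ∫⁻ x, f x ^ 2 ∂μ := by
  have h := eLpNorm_le_eLpNorm_of_exponent_le (p := 1) (q := 2) one_le_two
    hf.aestronglyMeasurable
  rw [eLpNorm_one_eq_lintegral_enorm,
    eLpNorm_eq_lintegral_rpow_enorm_toReal two_ne_zero ENNReal.ofNat_ne_top] at h
  simp only [enorm_eq_self, ENNReal.toReal_ofNat, ENNReal.rpow_two] at h
  calc (∫⁻ x, f x ∂μ) ^ 2 ≤ ((∫⁻ x, f x ^ 2 ∂μ) ^ (1 / 2 : ℝ)) ^ 2 := by gcongr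
    _ = ∫⁻ x, f x ^ 2 ∂μ := by
      rw [← ENNReal.rpow_natCast, ← ENNReal.rpow_mul]; norm_num

lemma enorm_integral_smul_le_eLpNorm_mul_eLpNorm {α E : Type*} [MeasurableSpace α]
    {μ : Measure α} [NormedAddCommGroup E] [NormedSpace ℝ E] {φ : α → ℝ} {f : α → E}
    (hφ : AEStronglyMeasurable φ μ) (hf : AEStronglyMeasurable f μ) :
    ‖∫ x, φ x • f x ∂μ‖ₑ ≤ eLpNorm φ 2 μ * eLpNorm f 2 μ :=
  (enorm_integral_le_lintegral_enorm _).trans <| by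
    rw [← eLpNorm_one_eq_lintegral_enorm]
    exact eLpNorm_smul_le_mul_eLpNorm hf hφ

lemma integral_sub_integral_smul_sub_integral {α E : Type*} [MeasurableSpace α] {μ : Measure α}
    [IsProbabilityMeasure μ] [NormedAddCommGroup E] [NormedSpace ℝ E] [CompleteSpace E]
    {ρ : α → ℝ} {u : α → E}
    (hρ : Integrable ρ μ) (hu : Integrable u μ) (hρu : Integrable (fun x => ρ x • u x) μ) :
    ∫ x, (ρ x - ∫ y, ρ y ∂μ) • (u x - ∫ y, u y ∂μ) ∂μ
      = ∫ x, ρ x • u x ∂μ - (∫ x, ρ x ∂μ) • ∫ x, u x ∂μ := by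
  simp_rw [sub_smul, smul_sub]
  have hρū : Integrable (fun x => ρ x • ∫ y, u y ∂μ) μ := hρ.smul_const _
  have hmu : Integrable (fun x => (∫ y, ρ y ∂μ) • u x) μ := hu.smul _
  rw [integral_sub (hρu.sub' hρū) (hmu.sub' (integrable_const _)), integral_sub hρu hρū,
    integral_sub hmu (integrable_const _), integral_smul_const, integral_smul, integral_const]
  simp

lemma Continuous.memLp_top_restrict_of_isBounded {X F : Type*} [PseudoMetricSpace X]
    [ProperSpace X] [MeasurableSpace X] [OpensMeasurableSpace X] [NormedAddCommGroup F]
    {μ : Measure X} {s : Set X} {f : X → F} (hf : Continuous f) (hs : Bornology.IsBounded s) :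
    MemLp f ∞ (μ.restrict s) := by
  obtain ⟨C, hC⟩ := hs.isCompact_closure.exists_bound_of_continuousOn hf.continuousOn
  refine memLp_top_of_bound hf.aestronglyMeasurable C ?_
  filter_upwards [ae_restrict_of_ae_restrict_of_subset subset_closure
    (ae_restrict_mem isClosed_closure.measurableSet)] with x hx using hC x hx

lemma enorm_sub_le_lintegral_enorm_fderiv_mul {E F : Type*} [NormedAddCommGroup E]
    [NormedSpace ℝ E] [NormedAddCommGroup F] [NormedSpace ℝ F] [CompleteSpace F] {f : E → F}
    (hf : ContDiff ℝ 1 f) (x h : E) :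
    ‖f (x + h) - f x‖ₑ ≤ (∫⁻ t in Set.Ioc (0 : ℝ) 1, ‖fderiv ℝ f (x + t • h)‖ₑ) * ‖h‖ₑ := by
  have hDf : Continuous (fderiv ℝ f) := hf.continuous_fderiv one_ne_zero
  have hderiv (t : ℝ) : HasDerivAt (fun s : ℝ => f (x + s • h)) (fderiv ℝ f (x + t • h) h) t := by
    have := ((hasDerivAt_id t).smul_const h).const_add x
    rw [one_smul] at this
    exact (hf.differentiable one_ne_zero _).hasFDerivAt.comp_hasDerivAt t this
  have hftc : ∫ t in (0 : ℝ)..1, fderiv ℝ f (x + t • h) h = f (x + h) - f x := by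
    have hcont : Continuous fun t : ℝ => fderiv ℝ f (x + t • h) h := by fun_prop
    rw [intervalIntegral.integral_eq_sub_of_hasDerivAt (fun t _ => hderiv t)
      (hcont.intervalIntegrable 0 1)]
    simp
  rw [← hftc, intervalIntegral.integral_of_le zero_le_one,
    ← lintegral_mul_const' _ _ enorm_ne_top]
  exact (enorm_integral_le_lintegral_enorm _).trans
    (lintegral_mono fun t => ContinuousLinearMap.le_opENorm _ _)

section Torus

open Metric

abbrev torus3Lattice : AddSubgroup E3 :=
  (Submodule.span ℤ (Set.range (EuclideanSpace.basisFun (Fin 3) ℝ).toBasis)).toAddSubgroup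

-- `ZSpan` registers countability for the submodule only, not for its `toAddSubgroup`.
instance : Countable torus3Lattice :=
  inferInstanceAs
    (Countable (Submodule.span ℤ (Set.range (EuclideanSpace.basisFun (Fin 3) ℝ).toBasis)))

lemma isAddFundamentalDomain_T3 : IsAddFundamentalDomain torus3Lattice T3 volume := by
  convert ZSpan.isAddFundamentalDomain' (EuclideanSpace.basisFun (Fin 3) ℝ).toBasis
    (volume : Measure E3) using 1
  ext x
  simp [T3, ZSpan.mem_fundamentalDomain]

lemma Torus3Periodic.vadd_eq {F : Type*} {f : E3 → F} (hf : Torus3Periodic f)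
    (g : torus3Lattice) (x : E3) : f (g +ᵥ x) = f x := by
  obtain ⟨g, hg⟩ := g
  choose k hk using (Module.Basis.mem_span_iff_repr_mem ℤ _ g).1 hg
  obtain rfl : g = (WithLp.equiv 2 (Fin 3 → ℝ)).symm (fun i => (k i : ℝ)) := by
    ext i; simpa using (hk i).symm
  exact (congrArg f (add_comm _ _)).trans (hf x k)

lemma Torus3Periodic.setLIntegral_comp_add_left {f : E3 → ℝ≥0∞} (hf : Torus3Periodic f)
    (c : E3) : ∫⁻ x in T3, f (c + x) = ∫⁻ x in T3, f x := by
  rw [(measurePreserving_add_left volume c).setLIntegral_comp_emb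
    (measurableEmbedding_addLeft c)]
  exact (isAddFundamentalDomain_T3.vadd_of_comm c).setLIntegral_eq isAddFundamentalDomain_T3 f
    hf.vadd_eq

lemma Torus3Periodic.setIntegral_comp_add_left {F : Type*} [NormedAddCommGroup F]
    [NormedSpace ℝ F] {f : E3 → F} (hf : Torus3Periodic f) (c : E3) :
    ∫ x in T3, f (c + x) = ∫ x in T3, f x := by
  rw [← (measurePreserving_add_left volume c).setIntegral_image_emb
    (measurableEmbedding_addLeft c)]
  exact (isAddFundamentalDomain_T3.vadd_of_comm c).setIntegral_eq isAddFundamentalDomain_T3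
    hf.vadd_eq

lemma Torus3Periodic.fderiv {F : Type*} [NormedAddCommGroup F] [NormedSpace ℝ F] {f : E3 → F}
    (hf : Torus3Periodic f) : Torus3Periodic (fderiv ℝ f) := by
  intro x k
  rw [← fderiv_comp_add_right]
  exact congrArg (_root_.fderiv ℝ · x) (funext fun y => hf y k)

lemma measurableSet_T3 : MeasurableSet T3 :=
  (MeasurableSet.univ_pi fun _ => measurableSet_Ico).preimage
    (MeasurableEquiv.toLp 2 (Fin 3 → ℝ)).symm.measurable

lemma volume_T3 : volume T3 = 1 := by
  show volume (WithLp.ofLp ⁻¹' _) = 1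
  rw [(PiLp.volume_preserving_ofLp (Fin 3)).measure_preimage
    (MeasurableSet.univ_pi fun _ => measurableSet_Ico).nullMeasurableSet]
  simp [volume_pi_pi, Real.volume_Ico]

instance : IsProbabilityMeasure μT := ⟨by rw [μT, Measure.restrict_apply_univ, volume_T3]⟩

def centerT3 : E3 := (WithLp.equiv 2 (Fin 3 → ℝ)).symm fun _ => 1 / 2

lemma T3_subset_closedBall : T3 ⊆ closedBall centerT3 1 := by
  intro x hx
  have hsq (i : Fin 3) : (x - centerT3) i ^ 2 ≤ 1 / 4 := by
    change (x i - 1 / 2) ^ 2 ≤ 1 / 4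
    obtain ⟨h0, h1⟩ : 0 ≤ x i ∧ x i < 1 := by simpa [T3] using hx i
    nlinarith
  rw [mem_closedBall, dist_eq_norm, EuclideanSpace.norm_eq, Real.sqrt_le_one]
  simp only [Fin.sum_univ_three, Real.norm_eq_abs, sq_abs]
  linarith [hsq 0, hsq 1, hsq 2]

lemma Continuous.memLp_top_μT {F : Type*} [NormedAddCommGroup F] {f : E3 → F}
    (hf : Continuous f) : MemLp f ∞ μT :=
  hf.memLp_top_restrict_of_isBounded (isBounded_closedBall.subset T3_subset_closedBall)

end Torus

section Poincare

instance : IsProbabilityMeasure (volume.restrict (Set.Ioc (0 : ℝ) 1)) := ⟨by simp⟩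

variable {F : Type*} [NormedAddCommGroup F] [NormedSpace ℝ F] [CompleteSpace F] {u : E3 → F}

lemma enorm_sub_setIntegral_le_lintegral (hu : ContDiff ℝ 1 u) (hper : Torus3Periodic u)
    (x : E3) :
    ‖u x - ∫ y in T3, u y‖ₑ ≤ ∫⁻ p, ‖fderiv ℝ u (x + p.2 • (p.1 - centerT3))‖ₑ
      ∂(μT.prod (volume.restrict (Set.Ioc (0 : ℝ) 1))) := by
  have hDu : Continuous (fderiv ℝ u) := hu.continuous_fderiv one_ne_zero
  have hshift : Integrable (fun y => u (x + (y - centerT3))) μT :=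
    ((hu.continuous.comp (by fun_prop)).memLp_top_μT).integrable le_top
  have hmean : ∫ y, (u (x + (y - centerT3)) - u x) ∂μT = (∫ y in T3, u y) - u x := by
    rw [integral_sub hshift (integrable_const _), integral_const, probReal_univ, one_smul, μT,
      ← hper.setIntegral_comp_add_left (x - centerT3)]
    simp only [sub_add_eq_add_sub, add_sub_assoc]
  calc ‖u x - ∫ y in T3, u y‖ₑ = ‖∫ y, (u (x + (y - centerT3)) - u x) ∂μT‖ₑ := by
        rw [hmean, enorm_sub_rev]
    _ ≤ ∫⁻ y, ‖u (x + (y - centerT3)) - u x‖ₑ ∂μT := enorm_integral_le_lintegral_enorm _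
    _ ≤ ∫⁻ y, (∫⁻ t in Set.Ioc (0 : ℝ) 1, ‖fderiv ℝ u (x + t • (y - centerT3))‖ₑ) ∂μT := by
        refine lintegral_mono_ae ?_
        filter_upwards [ae_restrict_mem measurableSet_T3] with y hy
        have hy1 : ‖y - centerT3‖ₑ ≤ 1 := by
          rw [← ofReal_norm, ← dist_eq_norm]
          exact ENNReal.ofReal_le_one.2 (T3_subset_closedBall hy)
        calc _ ≤ (∫⁻ t in Set.Ioc (0 : ℝ) 1, ‖fderiv ℝ u (x + t • (y - centerT3))‖ₑ)
              * ‖y - centerT3‖ₑ := enorm_sub_le_lintegral_enorm_fderiv_mul hu x _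
          _ ≤ _ := mul_le_of_le_one_right' hy1
    _ = _ := by
        rw [lintegral_prod]
        exact Continuous.aemeasurable (by fun_prop)

lemma lintegral_enorm_sub_setIntegral_sq_le (hu : ContDiff ℝ 1 u) (hper : Torus3Periodic u) :
    ∫⁻ x, ‖u x - ∫ y in T3, u y‖ₑ ^ 2 ∂μT ≤ ∫⁻ x, ‖fderiv ℝ u x‖ₑ ^ 2 ∂μT := by
  set ν := μT.prod (volume.restrict (Set.Ioc (0 : ℝ) 1))
  have hDu : Continuous (fderiv ℝ u) := hu.continuous_fderiv one_ne_zero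
  have hDuper : Torus3Periodic fun x => ‖fderiv ℝ u x‖ₑ ^ 2 := fun x k => by
    simp only [hper.fderiv x k]
  calc ∫⁻ x, ‖u x - ∫ y in T3, u y‖ₑ ^ 2 ∂μT
      ≤ ∫⁻ x, ∫⁻ p, ‖fderiv ℝ u (x + p.2 • (p.1 - centerT3))‖ₑ ^ 2 ∂ν ∂μT := by
        refine lintegral_mono fun x => ?_
        exact (pow_le_pow_left' (enorm_sub_setIntegral_le_lintegral hu hper x) 2).trans
          (sq_lintegral_le_lintegral_sq (Continuous.aemeasurable (by fun_prop)))
    _ = ∫⁻ p, ∫⁻ x, ‖fderiv ℝ u (p.2 • (p.1 - centerT3) + x)‖ₑ ^ 2 ∂μT ∂ν := by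
        rw [lintegral_lintegral_swap (Continuous.aemeasurable (by fun_prop))]
        simp only [add_comm]
    _ = ∫⁻ x, ‖fderiv ℝ u x‖ₑ ^ 2 ∂μT := by
        simp only [μT, hDuper.setLIntegral_comp_add_left, lintegral_const, measure_univ,
          mul_one]

lemma eLpNorm_sub_setIntegral_le (hu : ContDiff ℝ 1 u) (hper : Torus3Periodic u) :
    eLpNorm (fun x => u x - ∫ y in T3, u y) 2 μT ≤ eLpNorm (fun x => ‖fderiv ℝ u x‖) 2 μT := by
  simp only [eLpNorm_eq_lintegral_rpow_enorm_toReal two_ne_zero ENNReal.ofNat_ne_top,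
    ENNReal.toReal_ofNat, ENNReal.rpow_two, enorm_norm]
  exact ENNReal.rpow_le_rpow (lintegral_enorm_sub_setIntegral_sq_le hu hper) (by norm_num)

end Poincare

theorem average_lemma_general
    (ρ : E3 → ℝ) (hρ : MemLp ρ 2 μT)
    (hρbar : (∫ x in T3, ρ x) ≠ 0)
    (u : E3 → E3) (hu : ContDiff ℝ 1 u) (huper : Torus3Periodic u)
    (hmom : (∫ x in T3, ρ x • u x) = 0) :
    ‖∫ x in T3, u x‖ ≤
      ((eLpNorm (fun x => ρ x - ∫ y in T3, ρ y) 2 μT).toReal / |∫ x in T3, ρ x|)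
        * (eLpNorm (fun x => ‖fderiv ℝ u x‖) 2 μT).toReal := by
  set m := ∫ x in T3, ρ x
  set ū := ∫ x in T3, u x
  have hρm : MemLp (fun x => ρ x - m) 2 μT := hρ.sub (memLp_const m)
  have hDu : MemLp (fun x => ‖fderiv ℝ u x‖) 2 μT :=
    ((hu.continuous_fderiv one_ne_zero).norm.memLp_top_μT).mono_exponent le_top
  have hcov : ∫ x, (ρ x - m) • (u x - ū) ∂μT = -(m • ū) := by
    have hρ1 := hρ.integrable one_le_two
    have huTop := hu.continuous.memLp_top_μT
    simpa [μT, hmom] using integral_sub_integral_smul_sub_integral hρ1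
      (huTop.integrable le_top) (hρ1.smul_of_top_left huTop)
  have hbound : ENNReal.ofReal (|m| * ‖ū‖)
      ≤ eLpNorm (fun x => ρ x - m) 2 μT * eLpNorm (fun x => ‖fderiv ℝ u x‖) 2 μT :=
    calc ENNReal.ofReal (|m| * ‖ū‖) = ‖∫ x, (ρ x - m) • (u x - ū) ∂μT‖ₑ := by
          rw [hcov, enorm_neg, ← ofReal_norm, norm_smul, Real.norm_eq_abs]
      _ ≤ eLpNorm (fun x => ρ x - m) 2 μT * eLpNorm (fun x => u x - ū) 2 μT :=
          enorm_integral_smul_le_eLpNorm_mul_eLpNorm hρm.1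
            (hu.continuous.sub continuous_const).aestronglyMeasurable
      _ ≤ _ := by gcongr; exact eLpNorm_sub_setIntegral_le hu huper
  rw [div_mul_eq_mul_div, le_div_iff₀ (abs_pos.2 hρbar), mul_comm, ← ENNReal.toReal_mul]
  exact (ENNReal.ofReal_le_iff_le_toReal
    (ENNReal.mul_ne_top hρm.eLpNorm_ne_top hDu.eLpNorm_ne_top)).1 hbound

/-- **Average lemma.**
If `ρ ∈ L²(𝕋³)` has nonzero mean and the `C¹` vector field `u : 𝕋³ → ℝ³`
satisfies `∫ ρ u = 0`, then `|ū| ≤ (‖ρ − ρ̄‖_{L²} / |ρ̄|) ‖∇u‖_{L²}`. -/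
theorem average_lemma
    (ρ : E3 → ℝ) (hρ : MemLp ρ 2 μT) (hρper : Torus3Periodic ρ)
    (hρbar : (∫ x in T3, ρ x) ≠ 0)
    (u : E3 → E3) (hu : ContDiff ℝ 1 u) (huper : Torus3Periodic u)
    (hmom : (∫ x in T3, ρ x • u x) = 0) :
    ‖∫ x in T3, u x‖ ≤
      ((eLpNorm (fun x => ρ x - ∫ y in T3, ρ y) 2 μT).toReal / |∫ x in T3, ρ x|)
        * (eLpNorm (fun x => ‖fderiv ℝ u x‖) 2 μT).toReal :=
  average_lemma_general ρ hρ hρbar u hu huper hmom
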